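/- Let k ≥ 2 and write points of ℝ^k as x = (x′,x″) ∈ ℝ × ℝ^{k−1}. Let A ⊂ ℝ^k be a compact set, let L ≥ 2 and R > 0, let a = (a′,a″) ∈ A, and suppose φ : (a′−R, a′+R) → ℝ^{k−1} is Lipschitz with constant at most L and A ∩ C(a,R,3LR) = {(x′, φ(x′)) : |x′ − a′| < R}, where C(x,r,s) = B₁(x′,r) × B_{k−1}(x″,s). Let D be a bounded domain in ℝ^k with C(0,1,2L) ⊆ D ⊆ C(0,1,3L), and for r ∈ (0, R/(8L)) set D_{a,r} = a + rD = {a + r·y : y ∈ D}. Then for every x = (x′,x″) on the boundary ∂D_{a,r} one has |x″ − φ(x′)|/(L+1) ≤ dist(x, A) ≤ |x″ − φ(x′)|. -/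

import Mathlib

open MeasureTheory Metric Set Filter

noncomputable section

/-- First coordinate x′ of a point of ℝ^k. -/
def fstCoord (k : ℕ) (x : EuclideanSpace ℝ (Fin k)) : ℝ :=
  if h : 0 < k then x ⟨0, h⟩ else 0

/-- Remaining coordinates x″ ∈ ℝ^{k-1} of a point of ℝ^k. -/
def sndCoord (k : ℕ) (x : EuclideanSpace ℝ (Fin k)) : EuclideanSpace ℝ (Fin (k - 1)) :=
  WithLp.toLp 2 fun (i : Fin (k - 1)) => x ⟨i.1 + 1, by have := i.isLt; omega⟩

/-- The point (t, w) ∈ ℝ × ℝ^{k−1} viewed as a point of ℝ^k. -/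
def emb (k : ℕ) (t : ℝ) (w : EuclideanSpace ℝ (Fin (k - 1))) : EuclideanSpace ℝ (Fin k) :=
  WithLp.toLp 2 fun (i : Fin k) => if h : i.1 = 0 then t else w ⟨i.1 - 1, by have := i.isLt; omega⟩

/-- The open cylinder C(c,r,s) = B₁(c′,r) × B_{k−1}(c″,s). -/
def Cyl (k : ℕ) (c : EuclideanSpace ℝ (Fin k)) (r s : ℝ) : Set (EuclideanSpace ℝ (Fin k)) :=
  {x | |fstCoord k x - fstCoord k c| < r ∧ ‖sndCoord k x - sndCoord k c‖ < s}

section helpers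
variable {n : ℕ}

lemma fst_apply (x : EuclideanSpace ℝ (Fin (n+1))) : fstCoord (n+1) x = x 0 := by
  simp [fstCoord]

lemma fst_sub (x y : EuclideanSpace ℝ (Fin (n+1))) :
    fstCoord (n+1) (x - y) = fstCoord (n+1) x - fstCoord (n+1) y := by
  simp only [fst_apply]; rfl

lemma snd_sub (x y : EuclideanSpace ℝ (Fin (n+1))) :
    sndCoord (n+1) (x - y) = sndCoord (n+1) x - sndCoord (n+1) y := by
  ext i; simp [sndCoord]

lemma fst_add_smul (a y : EuclideanSpace ℝ (Fin (n+1))) (r : ℝ) :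
    fstCoord (n+1) (a + r • y) = fstCoord (n+1) a + r * fstCoord (n+1) y := by
  simp only [fst_apply]; rfl

lemma snd_add_smul (a y : EuclideanSpace ℝ (Fin (n+1))) (r : ℝ) :
    sndCoord (n+1) (a + r • y) = sndCoord (n+1) a + r • sndCoord (n+1) y := by
  ext i; simp [sndCoord]

lemma fst_zero : fstCoord (n+1) (0 : EuclideanSpace ℝ (Fin (n+1))) = 0 := by
  simp only [fst_apply]; rfl
lemma snd_zero : sndCoord (n+1) (0 : EuclideanSpace ℝ (Fin (n+1))) = 0 := by
  ext i; simp [sndCoord]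

lemma fst_emb (t : ℝ) (w : EuclideanSpace ℝ (Fin n)) : fstCoord (n+1) (emb (n+1) t w) = t := by
  simp [fst_apply, emb]
lemma snd_emb (t : ℝ) (w : EuclideanSpace ℝ (Fin n)) : sndCoord (n+1) (emb (n+1) t w) = w := by
  ext i; simp [emb, sndCoord]

lemma norm_split (v : EuclideanSpace ℝ (Fin (n+1))) :
    ‖v‖^2 = (fstCoord (n+1) v)^2 + ‖sndCoord (n+1) v‖^2 := by
  rw [EuclideanSpace.norm_eq, EuclideanSpace.norm_eq, Real.sq_sqrt (by positivity),
    Real.sq_sqrt (by positivity), Fin.sum_univ_succ]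
  simp [fstCoord, sndCoord, sq_abs, Fin.succ]

lemma cont_fst : Continuous (fstCoord (n+1)) := by
  have h : fstCoord (n+1) = fun x : EuclideanSpace ℝ (Fin (n+1)) =>
      EuclideanSpace.proj (0 : Fin (n+1)) x := by
    funext x; simp [fst_apply]
  rw [h]; exact (EuclideanSpace.proj (0 : Fin (n+1))).continuous

lemma cont_snd : Continuous (sndCoord (n+1)) := by
  exact (EuclideanSpace.equiv (Fin n) ℝ).symm.continuous.comp
    (continuous_pi fun i => (EuclideanSpace.proj (⟨i.1+1, by omega⟩ : Fin (n+1))).continuous)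

lemma fst_abs_le (v : EuclideanSpace ℝ (Fin (n+1))) : |fstCoord (n+1) v| ≤ ‖v‖ := by
  have h := norm_split v
  nlinarith [norm_nonneg v, norm_nonneg (sndCoord (n+1) v), abs_nonneg (fstCoord (n+1) v),
    sq_abs (fstCoord (n+1) v)]

lemma snd_norm_le (v : EuclideanSpace ℝ (Fin (n+1))) : ‖sndCoord (n+1) v‖ ≤ ‖v‖ := by
  have h := norm_split v
  nlinarith [norm_nonneg v, norm_nonneg (sndCoord (n+1) v), sq_nonneg (fstCoord (n+1) v)]

end helpers

/-- Lemma 3.1. -/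
theorem stmt_10 {k : ℕ} (hk : 2 ≤ k)
    (A : Set (EuclideanSpace ℝ (Fin k))) (hA : IsCompact A)
    (L R : ℝ) (hL : 2 ≤ L) (hR : 0 < R)
    (a : EuclideanSpace ℝ (Fin k)) (ha : a ∈ A)
    (φ : ℝ → EuclideanSpace ℝ (Fin (k - 1)))
    (hφLip : ∀ s ∈ Set.Ioo (fstCoord k a - R) (fstCoord k a + R),
      ∀ t ∈ Set.Ioo (fstCoord k a - R) (fstCoord k a + R), ‖φ s - φ t‖ ≤ L * |s - t|)
    (hgraph : A ∩ Cyl k a R (3 * L * R) =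
      {x | |fstCoord k x - fstCoord k a| < R ∧ sndCoord k x = φ (fstCoord k x)})
    (D : Set (EuclideanSpace ℝ (Fin k))) (hDo : IsOpen D) (hDc : IsConnected D)
    (hDb : Bornology.IsBounded D)
    (hD1 : Cyl k 0 1 (2 * L) ⊆ D) (hD2 : D ⊆ Cyl k 0 1 (3 * L))
    (r : ℝ) (hr0 : 0 < r) (hr : r < R / (8 * L)) :
    ∀ x ∈ frontier ((fun y => a + r • y) '' D),
      ‖sndCoord k x - φ (fstCoord k x)‖ / (L + 1) ≤ Metric.infDist x A ∧
      Metric.infDist x A ≤ ‖sndCoord k x - φ (fstCoord k x)‖ := by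
  obtain ⟨m, rfl⟩ : ∃ m, k = m + 1 := ⟨k - 1, by omega⟩
  intro x hx
  have hL0 : (0 : ℝ) < L := by linarith
  have hr8 : 8 * L * r < R := by
    nlinarith [(lt_div_iff₀ (by positivity : (0:ℝ) < 8 * L)).mp hr]
  -- a lies on the graph
  have haG : sndCoord (m+1) a = φ (fstCoord (m+1) a) := by
    have hmem : a ∈ A ∩ Cyl (m+1) a R (3 * L * R) := by
      refine ⟨ha, ?_, ?_⟩ <;> simp <;> positivity
    rw [hgraph] at hmem
    exact hmem.2
  -- frontier points satisfy the coordinate bounds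
  have hxS : |fstCoord (m+1) x - fstCoord (m+1) a| ≤ r ∧
      ‖sndCoord (m+1) x - sndCoord (m+1) a‖ ≤ 3 * L * r := by
    have hclosed : IsClosed {z : EuclideanSpace ℝ (Fin (m+1)) |
        |fstCoord (m+1) z - fstCoord (m+1) a| ≤ r ∧
        ‖sndCoord (m+1) z - sndCoord (m+1) a‖ ≤ 3 * L * r} := by
      exact IsClosed.inter
        (isClosed_le ((cont_fst.sub continuous_const).abs) continuous_const)
        (isClosed_le ((cont_snd.sub continuous_const).norm) continuous_const)
    have hsub : (fun y => a + r • y) '' D ⊆ {z : EuclideanSpace ℝ (Fin (m+1)) |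
        |fstCoord (m+1) z - fstCoord (m+1) a| ≤ r ∧
        ‖sndCoord (m+1) z - sndCoord (m+1) a‖ ≤ 3 * L * r} := by
      rintro - ⟨y, hyD, rfl⟩
      obtain ⟨hy1, hy2⟩ := hD2 hyD
      simp only [fst_zero, snd_zero, sub_zero] at hy1 hy2
      constructor
      · rw [fst_add_smul]
        have : |fstCoord (m+1) a + r * fstCoord (m+1) y - fstCoord (m+1) a|
            = r * |fstCoord (m+1) y| := by
          rw [add_sub_cancel_left, abs_mul, abs_of_pos hr0]
        rw [this]; nlinarith
      · rw [snd_add_smul]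
        have : sndCoord (m+1) a + r • sndCoord (m+1) y - sndCoord (m+1) a
            = r • sndCoord (m+1) y := by abel
        rw [this, norm_smul, Real.norm_eq_abs, abs_of_pos hr0]
        nlinarith
    exact hclosed.closure_subset_iff.mpr hsub (frontier_subset_closure hx)
  obtain ⟨hx1, hx2⟩ := hxS
  have hxr : |fstCoord (m+1) x - fstCoord (m+1) a| < R := by nlinarith
  have hxIoo : fstCoord (m+1) x ∈ Set.Ioo (fstCoord (m+1) a - R) (fstCoord (m+1) a + R) := by
    obtain ⟨h1, h2⟩ := abs_sub_lt_iff.mp hxr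
    exact ⟨by linarith, by linarith⟩
  have haIoo : fstCoord (m+1) a ∈ Set.Ioo (fstCoord (m+1) a - R) (fstCoord (m+1) a + R) :=
    ⟨by linarith, by linarith⟩
  -- the key bound ‖x″ − φ(x′)‖ ≤ 4Lr
  have hB : ‖sndCoord (m+1) x - φ (fstCoord (m+1) x)‖ ≤ 4 * L * r := by
    have h1 : ‖sndCoord (m+1) x - φ (fstCoord (m+1) x)‖ ≤
        ‖sndCoord (m+1) x - sndCoord (m+1) a‖ +
          ‖sndCoord (m+1) a - φ (fstCoord (m+1) x)‖ := by
      have := norm_add_le (sndCoord (m+1) x - sndCoord (m+1) a)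
        (sndCoord (m+1) a - φ (fstCoord (m+1) x))
      rwa [sub_add_sub_cancel] at this
    have h3 := hφLip (fstCoord (m+1) a) haIoo (fstCoord (m+1) x) hxIoo
    rw [← haG] at h3
    have h4 : |fstCoord (m+1) a - fstCoord (m+1) x| ≤ r := by
      rw [abs_sub_comm]; exact hx1
    nlinarith
  constructor
  · -- lower bound
    by_contra hlt
    push_neg at hlt
    obtain ⟨p, hpA, hpd⟩ := (Metric.infDist_lt_iff ⟨a, ha⟩).mp hlt
    have hfd : |fstCoord (m+1) x - fstCoord (m+1) p| ≤ dist x p := by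
      rw [dist_eq_norm, ← fst_sub]; exact fst_abs_le _
    have hsd : ‖sndCoord (m+1) x - sndCoord (m+1) p‖ ≤ dist x p := by
      rw [dist_eq_norm, ← snd_sub]; exact snd_norm_le _
    by_cases hpC : p ∈ Cyl (m+1) a R (3 * L * R)
    · have hmem : p ∈ A ∩ Cyl (m+1) a R (3 * L * R) := ⟨hpA, hpC⟩
      rw [hgraph] at hmem
      obtain ⟨hpR, hpφ⟩ := hmem
      have hpIoo : fstCoord (m+1) p ∈ Set.Ioo (fstCoord (m+1) a - R) (fstCoord (m+1) a + R) := by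
        obtain ⟨h1, h2⟩ := abs_sub_lt_iff.mp hpR
        exact ⟨by linarith, by linarith⟩
      have lip := hφLip (fstCoord (m+1) p) hpIoo (fstCoord (m+1) x) hxIoo
      rw [← hpφ] at lip
      have h1 : ‖sndCoord (m+1) x - φ (fstCoord (m+1) x)‖ ≤
          ‖sndCoord (m+1) x - sndCoord (m+1) p‖ +
            ‖sndCoord (m+1) p - φ (fstCoord (m+1) x)‖ := by
        have := norm_add_le (sndCoord (m+1) x - sndCoord (m+1) p)
          (sndCoord (m+1) p - φ (fstCoord (m+1) x))
        rwa [sub_add_sub_cancel] at this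
      have h4 : |fstCoord (m+1) p - fstCoord (m+1) x| ≤ dist x p := by
        rw [abs_sub_comm]; exact hfd
      have hdel : ‖sndCoord (m+1) x - φ (fstCoord (m+1) x)‖ / (L + 1) ≤ dist x p := by
        rw [div_le_iff₀ (by linarith)]
        nlinarith [dist_nonneg (x := x) (y := p)]
      linarith
    · simp only [Cyl, Set.mem_setOf_eq, not_and_or, not_lt] at hpC
      have hself : ‖sndCoord (m+1) x - φ (fstCoord (m+1) x)‖ / (L + 1) ≤
          ‖sndCoord (m+1) x - φ (fstCoord (m+1) x)‖ :=
        div_le_self (norm_nonneg _) (by linarith)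
      rcases hpC with hp1 | hp2
      · have : R - r ≤ |fstCoord (m+1) x - fstCoord (m+1) p| := by
          have ht := abs_sub_abs_le_abs_sub (fstCoord (m+1) p - fstCoord (m+1) a)
            (fstCoord (m+1) p - fstCoord (m+1) x)
          have he : fstCoord (m+1) p - fstCoord (m+1) a -
              (fstCoord (m+1) p - fstCoord (m+1) x) = fstCoord (m+1) x - fstCoord (m+1) a := by
            ring
          rw [he] at ht
          have := abs_sub_comm (fstCoord (m+1) p) (fstCoord (m+1) x)
          linarith [abs_sub_comm (fstCoord (m+1) x) (fstCoord (m+1) p)]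
        nlinarith
      · have : 3 * L * R - 3 * L * r ≤ ‖sndCoord (m+1) x - sndCoord (m+1) p‖ := by
          have ht := norm_add_le (sndCoord (m+1) p - sndCoord (m+1) x)
            (sndCoord (m+1) x - sndCoord (m+1) a)
          rw [sub_add_sub_cancel] at ht
          have := norm_sub_rev (sndCoord (m+1) p) (sndCoord (m+1) x)
          linarith
        nlinarith
  · -- upper bound
    have hyA : emb (m+1) (fstCoord (m+1) x) (φ (fstCoord (m+1) x)) ∈ A := by
      have hmem : emb (m+1) (fstCoord (m+1) x) (φ (fstCoord (m+1) x)) ∈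
          {z : EuclideanSpace ℝ (Fin (m+1)) |
            |fstCoord (m+1) z - fstCoord (m+1) a| < R ∧ sndCoord (m+1) z = φ (fstCoord (m+1) z)} := by
        simp only [Set.mem_setOf_eq, fst_emb, snd_emb]
        exact ⟨hxr, trivial⟩
      rw [← hgraph] at hmem
      exact hmem.1
    have hdist : dist x (emb (m+1) (fstCoord (m+1) x) (φ (fstCoord (m+1) x))) =
        ‖sndCoord (m+1) x - φ (fstCoord (m+1) x)‖ := by
      rw [dist_eq_norm]
      set y := emb (m+1) (fstCoord (m+1) x) (φ (fstCoord (m+1) x)) with hy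
      have h0 : fstCoord (m+1) (x - y) = 0 := by rw [fst_sub, hy, fst_emb, sub_self]
      have hs : sndCoord (m+1) (x - y) = sndCoord (m+1) x - φ (fstCoord (m+1) x) := by
        rw [snd_sub, hy, snd_emb]
      have hns := norm_split (x - y)
      rw [h0, hs] at hns
      calc ‖x - y‖ = Real.sqrt (‖x - y‖ ^ 2) := (Real.sqrt_sq (norm_nonneg _)).symm
        _ = Real.sqrt (‖sndCoord (m+1) x - φ (fstCoord (m+1) x)‖ ^ 2) := by
            rw [hns]; ring_nf
        _ = ‖sndCoord (m+1) x - φ (fstCoord (m+1) x)‖ := Real.sqrt_sq (norm_nonneg _)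
    calc Metric.infDist x A ≤ dist x (emb (m+1) (fstCoord (m+1) x) (φ (fstCoord (m+1) x))) :=
          Metric.infDist_le_dist_of_mem hyA
      _ = _ := hdist
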